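/- arXiv:2011.03141 — 2 statements merged into one kernel-verified Lean document; each statement's English description precedes it below -/
import Mathlib

section
/- Let ψ be a unit vector in ℂ^d and let σ be a density matrix on ℂ^d. Then (1/2)‖σ − |ψ⟩⟨ψ|‖₁ ≤ √(1 − ⟨ψ|σ|ψ⟩). -/
open Matrix ComplexOrder

noncomputable def traceNorm {n : Type*} [Fintype n] [DecidableEq n]
    (A : Matrix n n ℂ) : ℝ :=
  (((Matrix.posSemidef_conjTranspose_mul_self A).isHermitian.eigenvectorUnitary : Matrix n n ℂ) *
    diagonal ((fun x : ℝ => (x : ℂ)) ∘ (Real.sqrt ∘ (Matrix.posSemidef_conjTranspose_mul_self A).isHermitian.eigenvalues)) *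
    (star ((Matrix.posSemidef_conjTranspose_mul_self A).isHermitian.eigenvectorUnitary : Matrix n n ℂ))).trace.re

noncomputable def ketbra {d : ℕ} (ψ : Fin d → ℂ) : Matrix (Fin d) (Fin d) ℂ :=
  fun i j => ψ i * (starRingEnd ℂ) (ψ j)

noncomputable def kronPow {d : ℕ} (M : Matrix (Fin d) (Fin d) ℂ) (k : ℕ) :
    Matrix (Fin k → Fin d) (Fin k → Fin d) ℂ :=
  fun i j => ∏ t : Fin k, M (i t) (j t)

noncomputable def fid {d : ℕ} (ψ : Fin d → ℂ) (σ : Matrix (Fin d) (Fin d) ℂ) : ℝ :=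
  (∑ i, ∑ j, (starRingEnd ℂ) (ψ i) * σ i j * ψ j).re

/-!
With `Δ = σ - |ψ⟩⟨ψ|`, the matrix `Δ + |ψ⟩⟨ψ| = σ` is positive, so `Δ` has at most one
negative eigenvalue `λ`; as `tr Δ = 0`, `‖Δ‖₁ = -2λ`. For a unit eigenvector `v` of `λ`,
`-λ = |⟨ψ|v⟩|² - ⟨v|σ|v⟩`. Let `F = ⟨ψ|σ|ψ⟩` and write `v = c ψ + w` with `w ⊥ ψ`. The
triangle inequality for the seminorm `x ↦ ‖√σ x‖` gives `⟨v|σ|v⟩ ≥ (|c| √F - ‖√σ w‖)²`, and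
`‖√σ w‖² ≤ ‖w‖² (1 - F)` because the compression of `σ` to `span {ψ, w}` has trace at most `1`.
What is left is a trigonometric inequality in the plane.
-/

/-- With `a = cos α`, `f = cos β`, the extreme case `q = sin α sin β` reads
`cos² α - cos² (α + β) = sin β sin (2α + β) ≤ sin β`. -/
lemma sq_sub_sqrt_one_sub_sq_le {a f q : ℝ} (ha : 0 ≤ a) (ha1 : a ^ 2 ≤ 1) (hf : 0 ≤ f)
    (hq : 0 ≤ q) (hqa : q ^ 2 ≤ (1 - a ^ 2) * (1 - f ^ 2)) :
    a ^ 2 - √(1 - f ^ 2) ≤ (a * f - q) ^ 2 := by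
  set G := √(1 - f ^ 2)
  rcases le_or_gt (a ^ 2) G with haG | haG
  · nlinarith [sq_nonneg (a * f - q)]
  rcases lt_or_ge 1 (f ^ 2) with hf1 | hf1
  · have hG : G = 0 := Real.sqrt_eq_zero_of_nonpos (by linarith)
    have hq0 : q = 0 := by nlinarith
    rw [hG, hq0]
    nlinarith [mul_le_mul_of_nonneg_left hf1.le (sq_nonneg a)]
  set b := √(1 - a ^ 2)
  have hG : G ^ 2 = 1 - f ^ 2 := Real.sq_sqrt (by linarith)
  have hb : b ^ 2 = 1 - a ^ 2 := Real.sq_sqrt (by linarith)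
  have hG0 : 0 ≤ G := Real.sqrt_nonneg _
  have hb0 : 0 ≤ b := Real.sqrt_nonneg _
  have hqb : q ≤ b * G :=
    (pow_le_pow_iff_left₀ hq (by positivity) two_ne_zero).mp (by rw [mul_pow, hb, hG]; exact hqa)
  have hbG : b * G ≤ a * f :=
    (pow_le_pow_iff_left₀ (by positivity) (by positivity) two_ne_zero).mp (by
      rw [mul_pow, mul_pow, hb, hG]; nlinarith)
  have hsin : 2 * a * b * f + (a ^ 2 - b ^ 2) * G ≤ 1 := by
    have hab : (2 * a * b) ^ 2 + (a ^ 2 - b ^ 2) ^ 2 = 1 := by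
      linear_combination (a ^ 2 + b ^ 2 + 1) * hb
    nlinarith [sq_nonneg (2 * a * b - f), sq_nonneg (a ^ 2 - b ^ 2 - G)]
  have hextreme : a ^ 2 - (a * f - b * G) ^ 2 = G * (2 * a * b * f + (a ^ 2 - b ^ 2) * G) := by
    linear_combination (-a ^ 2) * hG
  nlinarith [mul_le_of_le_one_right hG0 hsin]

open Finset in
lemma sum_abs_le_two_mul_of_sum_eq_zero {ι : Type*} [Fintype ι] {x : ι → ℝ} {B : ℝ}
    (hsum : ∑ i, x i = 0) (hneg : #{i | x i < 0} ≤ 1) (hB : ∀ i, -x i ≤ B) (hB0 : 0 ≤ B) :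
    ∑ i, |x i| ≤ 2 * B := by
  have habs : ∀ i, |x i| = x i + 2 * if x i < 0 then -x i else 0 := fun i => by
    split_ifs with h
    · rw [abs_of_neg h]; ring
    · rw [abs_of_nonneg (not_lt.mp h)]; ring
  calc ∑ i, |x i| = 2 * ∑ i with x i < 0, -x i := by
        rw [sum_congr rfl fun i _ => habs i, sum_add_distrib, hsum, zero_add, ← mul_sum,
          sum_filter]
    _ ≤ 2 * (#{i | x i < 0} • B) := by gcongr; exact sum_le_card_nsmul _ _ _ fun i _ => hB i
    _ ≤ 2 * B := by
        rw [nsmul_eq_mul]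
        gcongr
        exact mul_le_of_le_one_left hB0 (by exact_mod_cast hneg)

section TraceNorm

variable {n : Type*} [Fintype n] [DecidableEq n]

lemma Matrix.IsHermitian.trace_cfc {A : Matrix n n ℂ} (hA : A.IsHermitian) (f : ℝ → ℝ) :
    (cfc f A).trace = ∑ i, (f (hA.eigenvalues i) : ℂ) := by
  rw [hA.cfc_eq, IsHermitian.cfc, Unitary.conjStarAlgAut_apply, trace_mul_cycle,
    Unitary.coe_star_mul_self, one_mul, trace_diagonal]
  rfl

lemma traceNorm_eq_re_trace_cfc_sqrt (A : Matrix n n ℂ) :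
    traceNorm A = (cfc Real.sqrt (Aᴴ * A)).trace.re := by
  rw [(posSemidef_conjTranspose_mul_self A).isHermitian.cfc_eq]
  rfl

lemma Matrix.IsHermitian.traceNorm_eq_sum_abs_eigenvalues {A : Matrix n n ℂ}
    (hA : A.IsHermitian) : traceNorm A = ∑ i, |hA.eigenvalues i| := by
  have hsq : Aᴴ * A = cfc (fun x : ℝ => x * x) A := by
    rw [hA.eq, cfc_mul (fun x : ℝ => x) (fun x : ℝ => x) A, cfc_id' ℝ A]
  rw [traceNorm_eq_re_trace_cfc_sqrt, hsq, ← cfc_comp' Real.sqrt (fun x : ℝ => x * x) A]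
  simp only [Real.sqrt_mul_self_eq_abs, hA.trace_cfc, ← Complex.ofReal_sum, Complex.ofReal_re]

end TraceNorm

namespace Matrix

variable {n : Type*} [Fintype n]

lemma star_dotProduct_self_eq_sum_norm_sq (y : n → ℂ) :
    star y ⬝ᵥ y = ((∑ i, ‖y i‖ ^ 2 : ℝ) : ℂ) := by
  simp only [dotProduct, Pi.star_apply, Complex.star_def, Complex.conj_mul']
  push_cast
  rfl

lemma re_star_dotProduct_self_eq_norm_sq (y : n → ℂ) :
    (star y ⬝ᵥ y).re = ‖WithLp.toLp 2 y‖ ^ 2 := by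
  rw [← inner_self_eq_norm_sq (𝕜 := ℂ), EuclideanSpace.inner_toLp_toLp, dotProduct_comm]
  rfl

lemma star_dotProduct_vecMulVec_star_mulVec (u y : n → ℂ) :
    star y ⬝ᵥ (vecMulVec u (star u) *ᵥ y) = (‖star u ⬝ᵥ y‖ ^ 2 : ℝ) := by
  rw [vecMulVec_mulVec, dotProduct_smul, MulOpposite.smul_eq_mul_unop, MulOpposite.unop_op,
    star_dotProduct, Complex.star_def, Complex.conj_mul', Complex.ofReal_pow]

lemma trace_mul_vecMulVec_star (A : Matrix n n ℂ) (u : n → ℂ) :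
    (A * vecMulVec u (star u)).trace = star u ⬝ᵥ (A *ᵥ u) := by
  rw [mul_vecMulVec, trace_vecMulVec, dotProduct_comm]

lemma isHermitian_vecMulVec_star (u : n → ℂ) : (vecMulVec u (star u)).IsHermitian :=
  (posSemidef_vecMulVec_self_star u).isHermitian

lemma PosSemidef.re_trace_mul_mul_self_nonneg {σ Q : Matrix n n ℂ} (hσ : σ.PosSemidef)
    (hQ : Q.IsHermitian) : 0 ≤ (σ * (Q * Q)).trace.re := by
  have h : (σ * (Q * Q)).trace = (Q * σ * Qᴴ).trace := by
    rw [hQ.eq, ← Matrix.mul_assoc, trace_mul_comm, Matrix.mul_assoc]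
  rw [h]
  exact (Complex.le_def.mp (hσ.mul_mul_conjTranspose_same Q).trace_nonneg).1

variable [DecidableEq n]

open scoped MatrixOrder in
lemma PosSemidef.re_dotProduct_mulVec_eq_norm_sq {A : Matrix n n ℂ}
    (hA : A.PosSemidef) (x : n → ℂ) :
    (star x ⬝ᵥ (A *ᵥ x)).re = ‖WithLp.toLp 2 (CFC.sqrt A *ᵥ x)‖ ^ 2 := by
  have hS : (CFC.sqrt A)ᴴ = CFC.sqrt A := (CFC.sqrt_nonneg A).posSemidef.isHermitian.eq
  rw [← re_star_dotProduct_self_eq_norm_sq, star_mulVec, hS, ← dotProduct_mulVec, mulVec_mulVec,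
    CFC.sqrt_mul_sqrt_self A hA.nonneg]

lemma PosSemidef.re_dotProduct_mulVec_le_of_orthogonal {σ : Matrix n n ℂ}
    (hσ : σ.PosSemidef) {ψ w : n → ℂ} (hψ : star ψ ⬝ᵥ ψ = 1) (hψw : star ψ ⬝ᵥ w = 0) :
    (star w ⬝ᵥ (σ *ᵥ w)).re ≤ (star w ⬝ᵥ w).re * (σ.trace.re - (star ψ ⬝ᵥ (σ *ᵥ ψ)).re) := by
  rcases eq_or_ne w 0 with rfl | hw
  · simp
  set r : ℝ := (star w ⬝ᵥ w).re
  have hr : star w ⬝ᵥ w = r := Complex.eq_re_of_ofReal_le (r := 0) (by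
    rw [Complex.ofReal_zero]; exact dotProduct_star_self_nonneg w)
  have hr0 : 0 < r := (Complex.lt_def.mp (dotProduct_star_self_pos_iff.mpr hw)).1
  have hwψ : star w ⬝ᵥ ψ = 0 := by rw [star_dotProduct, hψw, star_zero]
  -- `Q` is `r` times the orthogonal projection onto `(span {ψ, w})ᗮ`.
  set Q := r • (1 - vecMulVec ψ (star ψ)) - vecMulVec w (star w)
  have hQ : Q.IsHermitian :=
    ((isHermitian_one.sub (isHermitian_vecMulVec_star ψ)).smul (IsSelfAdjoint.all r)).sub
      (isHermitian_vecMulVec_star w)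
  have hQQ : Q * Q = r • Q := by
    simp only [Q, sub_mul, mul_sub, smul_mul, one_mul, mul_one, mul_smul_comm,
      vecMulVec_mul_vecMulVec, hψ, hψw, hwψ, hr, one_smul, zero_smul, vecMulVec_zero,
      ← Complex.coe_smul, vecMulVec_smul]
    module
  have htr : (σ * Q).trace = r * (σ.trace - star ψ ⬝ᵥ (σ *ᵥ ψ)) - star w ⬝ᵥ (σ *ᵥ w) := by
    simp only [Q, mul_sub, mul_smul_comm, mul_one, trace_sub, trace_smul,
      trace_mul_vecMulVec_star, Complex.real_smul]
  have h := hσ.re_trace_mul_mul_self_nonneg hQ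
  rw [hQQ, mul_smul_comm, trace_smul, htr, Complex.smul_re, Complex.sub_re,
    Complex.re_ofReal_mul, Complex.sub_re, smul_eq_mul] at h
  nlinarith

open scoped MatrixOrder in
lemma PosSemidef.norm_dotProduct_sq_sub_le_sqrt {σ : Matrix n n ℂ}
    (hσ : σ.PosSemidef) (hσtr : σ.trace = 1) {ψ v : n → ℂ} (hψ : star ψ ⬝ᵥ ψ = 1)
    (hv : star v ⬝ᵥ v = 1) :
    ‖star ψ ⬝ᵥ v‖ ^ 2 - (star v ⬝ᵥ (σ *ᵥ v)).re ≤ √(1 - (star ψ ⬝ᵥ (σ *ᵥ ψ)).re) := by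
  set c := star ψ ⬝ᵥ v
  set w := v - c • ψ
  have hψw : star ψ ⬝ᵥ w = 0 := by simp [w, c, dotProduct_sub, hψ]
  have hw : (star w ⬝ᵥ w).re = 1 - ‖c‖ ^ 2 := by
    have hvψ : star v ⬝ᵥ ψ = star c := star_dotProduct v ψ
    have : star w ⬝ᵥ w = 1 - star c * c := by
      simp only [w, star_sub, star_smul, sub_dotProduct, dotProduct_sub, smul_dotProduct,
        dotProduct_smul, hv, hψ, hvψ, smul_eq_mul]
      ring
    rw [this, Complex.star_def, Complex.conj_mul', Complex.sub_re, Complex.one_re,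
      ← Complex.ofReal_pow, Complex.ofReal_re]
  have hc : ‖c‖ ^ 2 ≤ 1 := by
    nlinarith [re_star_dotProduct_self_eq_norm_sq w, sq_nonneg ‖WithLp.toLp 2 w‖]
  set S := CFC.sqrt σ
  have hlow : (‖c‖ * ‖WithLp.toLp 2 (S *ᵥ ψ)‖ - ‖WithLp.toLp 2 (S *ᵥ w)‖) ^ 2
      ≤ (star v ⬝ᵥ (σ *ᵥ v)).re := by
    have hv' : WithLp.toLp 2 (S *ᵥ v) = c • WithLp.toLp 2 (S *ᵥ ψ) + WithLp.toLp 2 (S *ᵥ w) := by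
      simp [w, mulVec_sub, mulVec_smul]
    have htri := abs_norm_sub_norm_le (c • WithLp.toLp 2 (S *ᵥ ψ)) (-WithLp.toLp 2 (S *ᵥ w))
    rw [norm_neg, sub_neg_eq_add, ← hv', norm_smul] at htri
    rw [hσ.re_dotProduct_mulVec_eq_norm_sq, ← sq_abs]
    exact pow_le_pow_left₀ (abs_nonneg _) htri 2
  have hs := hσ.re_dotProduct_mulVec_le_of_orthogonal hψ hψw
  rw [hσtr, Complex.one_re, hw, hσ.re_dotProduct_mulVec_eq_norm_sq,
    hσ.re_dotProduct_mulVec_eq_norm_sq] at hs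
  have := sq_sub_sqrt_one_sub_sq_le (norm_nonneg c) hc (norm_nonneg _) (norm_nonneg _) hs
  rw [hσ.re_dotProduct_mulVec_eq_norm_sq ψ]
  linarith

lemma IsHermitian.star_eigenvectorBasis_dotProduct {A : Matrix n n ℂ} (hA : A.IsHermitian)
    (k l : n) :
    star ⇑(hA.eigenvectorBasis k) ⬝ᵥ ⇑(hA.eigenvectorBasis l) = if k = l then 1 else 0 := by
  rw [dotProduct_comm]
  exact orthonormal_iff_ite.mp hA.eigenvectorBasis.orthonormal k l

lemma IsHermitian.dotProduct_mulVec_smul_add_smul_eigenvectorBasis {A : Matrix n n ℂ}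
    (hA : A.IsHermitian) {i j : n} (hij : i ≠ j) (α β : ℂ) :
    star (α • ⇑(hA.eigenvectorBasis i) + β • ⇑(hA.eigenvectorBasis j)) ⬝ᵥ
        (A *ᵥ (α • ⇑(hA.eigenvectorBasis i) + β • ⇑(hA.eigenvectorBasis j)))
      = ((‖α‖ ^ 2 * hA.eigenvalues i + ‖β‖ ^ 2 * hA.eigenvalues j : ℝ) : ℂ) := by
  simp only [mulVec_add, mulVec_smul, hA.mulVec_eigenvectorBasis, ← Complex.coe_smul, smul_smul,
    star_add, star_smul, add_dotProduct, dotProduct_add, smul_dotProduct, dotProduct_smul,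
    hA.star_eigenvectorBasis_dotProduct, if_pos, if_neg hij, if_neg hij.symm, smul_eq_mul]
  push_cast
  rw [← Complex.conj_mul', ← Complex.conj_mul']
  simp only [Complex.star_def]
  ring

open Finset in
lemma IsHermitian.card_filter_eigenvalues_neg_le_one {A : Matrix n n ℂ} (hA : A.IsHermitian)
    {u : n → ℂ} (hAu : (A + vecMulVec u (star u)).PosSemidef) :
    #{i | hA.eigenvalues i < 0} ≤ 1 := by
  rw [card_le_one]
  intro i hi j hj
  simp only [mem_filter, mem_univ, true_and] at hi hj
  by_contra hij
  set e : n → n → ℂ := fun k => ⇑(hA.eigenvectorBasis k)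
  set c : n → ℂ := fun k => star u ⬝ᵥ e k
  have key : ∀ α β : ℂ, 0 ≤ ‖α‖ ^ 2 * hA.eigenvalues i + ‖β‖ ^ 2 * hA.eigenvalues j
      + ‖α * c i + β * c j‖ ^ 2 := by
    intro α β
    have h := (Complex.le_def.mp (hAu.dotProduct_mulVec_nonneg (α • e i + β • e j))).1
    have hc : star u ⬝ᵥ (α • e i + β • e j) = α * c i + β * c j := by
      simp only [dotProduct_add, dotProduct_smul, smul_eq_mul, c]
    rwa [add_mulVec, dotProduct_add, Complex.add_re, star_dotProduct_vecMulVec_star_mulVec,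
      hA.dotProduct_mulVec_smul_add_smul_eigenvectorBasis hij, hc, Complex.ofReal_re,
      Complex.ofReal_re, Complex.zero_re] at h
  -- Positivity at `e i` forces `c i ≠ 0`; at `c j • e i - c i • e j`, which is orthogonal
  -- to `u`, it gives `‖c j‖² λ i + ‖c i‖² λ j ≥ 0`.
  have h1 := key 1 0
  have h2 := key (c j) (-c i)
  rw [show c j * c i + -c i * c j = 0 by ring] at h2
  simp only [norm_one, norm_zero, norm_neg, one_pow, one_mul, zero_mul, add_zero, ne_eq,
    OfNat.ofNat_ne_zero, not_false_eq_true, zero_pow] at h1 h2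
  nlinarith [mul_nonpos_of_nonneg_of_nonpos (sq_nonneg ‖c j‖) hi.le,
    mul_neg_of_pos_of_neg (show 0 < ‖c i‖ ^ 2 by linarith) hj]

end Matrix

lemma ketbra_eq_vecMulVec {d : ℕ} (ψ : Fin d → ℂ) : ketbra ψ = vecMulVec ψ (star ψ) := rfl

lemma fid_eq_re_dotProduct {d : ℕ} (ψ : Fin d → ℂ) (σ : Matrix (Fin d) (Fin d) ℂ) :
    fid ψ σ = (star ψ ⬝ᵥ (σ *ᵥ ψ)).re := by
  simp only [fid, dotProduct, mulVec, Finset.mul_sum, mul_assoc, Pi.star_apply, Complex.star_def]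

/-- Pure-target Fuchs–van de Graaf inequality. -/
theorem trace_dist_le_sqrt_one_sub_fidelity {d : ℕ} (ψ : Fin d → ℂ)
    (hψ : ∑ i, ‖ψ i‖ ^ 2 = 1)
    (σ : Matrix (Fin d) (Fin d) ℂ) (hσ : σ.PosSemidef) (hσtr : σ.trace = 1) :
    (1 / 2 : ℝ) * traceNorm (σ - ketbra ψ) ≤ Real.sqrt (1 - fid ψ σ) := by
  have hψ₁ : star ψ ⬝ᵥ ψ = 1 := by
    rw [star_dotProduct_self_eq_sum_norm_sq, hψ, Complex.ofReal_one]
  rw [ketbra_eq_vecMulVec, fid_eq_re_dotProduct]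
  set Δ := σ - vecMulVec ψ (star ψ)
  have hΔ : Δ.IsHermitian := hσ.isHermitian.sub (isHermitian_vecMulVec_star ψ)
  have hsum : ∑ i, hΔ.eigenvalues i = 0 := by
    have h := hΔ.trace_eq_sum_eigenvalues
    rw [trace_sub, hσtr, trace_vecMulVec, dotProduct_comm, hψ₁, sub_self] at h
    simpa using congrArg Complex.re h.symm
  have hneg := hΔ.card_filter_eigenvalues_neg_le_one (u := ψ) (by simpa [Δ] using hσ)
  have hbound : ∀ i, -hΔ.eigenvalues i ≤ √(1 - (star ψ ⬝ᵥ (σ *ᵥ ψ)).re) := fun i => by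
    have := hσ.norm_dotProduct_sq_sub_le_sqrt hσtr hψ₁
      (by simpa using hΔ.star_eigenvectorBasis_dotProduct i i)
    rw [hΔ.eigenvalues_eq, sub_mulVec, dotProduct_sub, RCLike.re_to_complex, Complex.sub_re,
      star_dotProduct_vecMulVec_star_mulVec, Complex.ofReal_re]
    linarith
  rw [hΔ.traceNorm_eq_sum_abs_eigenvalues]
  linarith [sum_abs_le_two_mul_of_sum_eq_zero hsum hneg hbound (Real.sqrt_nonneg _)]
end

section
/- Let δ, ε ≥ 0, k ≥ 1 and a > 0. Let p, q : Fin m → ℝ be probability vectors and let f : Fin m → ℝ satisfy 0 ≤ f_z ≤ 1 for all z. Assume ∑_z p_z (1 − f_z) ≤ δ and |∑_z (q_z − p_z) f_z^k| ≤ ε. Then ∑_z q_z f_z^k ≥ 1 − ε − kδ/a − k√a. -/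
/-!
Bernoulli's inequality `f ^ k ≥ 1 - k (1 - f)`, averaged against `p`, gives
`∑ p f ^ k ≥ 1 - k d` with `d = ∑ p (1 - f) ≤ min δ 1`, and `min δ 1 ≤ δ / a + √a`
(use `δ ≤ δ / a` when `a ≤ 1` and `1 ≤ √a` when `1 ≤ a`). Privacy moves the average
from `p` to `q` at a cost of at most `ε`.
-/

open Finset

section WeightedBernoulli

variable {ι : Type*} [Fintype ι] (p f : ι → ℝ)

theorem one_sub_mul_sum_le_sum_mul_pow (hp0 : ∀ i, 0 ≤ p i) (hp1 : ∑ i, p i = 1)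
    (hf : ∀ i, -1 ≤ f i) (k : ℕ) :
    1 - k * ∑ i, p i * (1 - f i) ≤ ∑ i, p i * f i ^ k :=
  calc 1 - k * ∑ i, p i * (1 - f i) = ∑ i, p i - k * ∑ i, p i * (1 - f i) := by rw [hp1]
    _ = ∑ i, p i * (1 + k * (f i - 1)) := by
        rw [mul_sum, ← sum_sub_distrib]
        exact sum_congr rfl fun i _ => by ring
    _ ≤ ∑ i, p i * f i ^ k :=
        sum_le_sum fun i _ => mul_le_mul_of_nonneg_left (one_add_mul_sub_le_pow (hf i) k) (hp0 i)

theorem sum_mul_one_sub_le_one (hp0 : ∀ i, 0 ≤ p i) (hp1 : ∑ i, p i = 1)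
    (hf : ∀ i, 0 ≤ f i) : ∑ i, p i * (1 - f i) ≤ 1 :=
  hp1 ▸ sum_le_sum fun i _ => mul_le_of_le_one_right (hp0 i) (by linarith [hf i])

end WeightedBernoulli

theorem min_le_div_add_sqrt {δ a : ℝ} (hδ : 0 ≤ δ) (ha : 0 < a) :
    min δ 1 ≤ δ / a + Real.sqrt a := by
  rcases le_total a 1 with h | h
  · have : δ ≤ δ / a := (le_div_iff₀ ha).mpr (mul_le_of_le_one_right hδ h)
    linarith [min_le_left δ 1, Real.sqrt_nonneg a]
  · have : 1 ≤ Real.sqrt a := Real.one_le_sqrt.mpr h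
    linarith [min_le_right δ 1, div_nonneg hδ ha.le]

theorem fidelity_lower_bound_general (δ ε : ℝ) (hδ : 0 ≤ δ)
    (k : ℕ) (a : ℝ) (ha : 0 < a)
    {m : ℕ} (p q f : Fin m → ℝ)
    (hp0 : ∀ z, 0 ≤ p z) (hp1 : ∑ z, p z = 1)
    (hf : ∀ z, 0 ≤ f z ∧ f z ≤ 1)
    (h1 : ∑ z, p z * (1 - f z) ≤ δ)
    (h2 : |∑ z, (q z - p z) * (f z) ^ k| ≤ ε) :
    1 - ε - (k : ℝ) * δ / a - (k : ℝ) * Real.sqrt a ≤ ∑ z, q z * (f z) ^ k := by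
  set d := ∑ z, p z * (1 - f z)
  have hp_avg : 1 - k * d ≤ ∑ z, p z * f z ^ k :=
    one_sub_mul_sum_le_sum_mul_pow p f hp0 hp1 (fun z => by linarith [(hf z).1]) k
  have hd : d ≤ δ / a + Real.sqrt a :=
    (le_min h1 (sum_mul_one_sub_le_one p f hp0 hp1 fun z => (hf z).1)).trans
      (min_le_div_add_sqrt hδ ha)
  have hkd : k * d ≤ k * δ / a + k * Real.sqrt a := by
    rw [mul_div_assoc, ← mul_add]
    exact mul_le_mul_of_nonneg_left hd k.cast_nonneg
  have hqp : ∑ z, p z * f z ^ k - ε ≤ ∑ z, q z * f z ^ k := by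
    have := (abs_le.mp h2).1
    simp only [sub_mul, sum_sub_distrib] at this
    linarith
  linarith

/-- Fidelity conclusion of the paper's Theorem 3 (computational case). -/
theorem fidelity_lower_bound (δ ε : ℝ) (hδ : 0 ≤ δ) (hε : 0 ≤ ε)
    (k : ℕ) (hk : 1 ≤ k) (a : ℝ) (ha : 0 < a)
    {m : ℕ} (p q f : Fin m → ℝ)
    (hp0 : ∀ z, 0 ≤ p z) (hp1 : ∑ z, p z = 1)
    (hq0 : ∀ z, 0 ≤ q z) (hq1 : ∑ z, q z = 1)
    (hf : ∀ z, 0 ≤ f z ∧ f z ≤ 1)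
    (h1 : ∑ z, p z * (1 - f z) ≤ δ)
    (h2 : |∑ z, (q z - p z) * (f z) ^ k| ≤ ε) :
    1 - ε - (k : ℝ) * δ / a - (k : ℝ) * Real.sqrt a ≤ ∑ z, q z * (f z) ^ k :=
  fidelity_lower_bound_general δ ε hδ k a ha p q f hp0 hp1 hf h1 h2
end
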